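/- The minimizer of (1/2)‖Z − W‖_F² + λ·rank(Z) over all matrices Z is given by hard-thresholding the SVD of W: Z* = U D_q V', where W = U D V' is the SVD with singular values d_1 ≥ d_2 ≥ ... and D_q retains exactly those singular values d_i with d_i² > 2λ (setting the rest to zero). Equivalently, for each q, the best rank-≤q Frobenius approximation contributes error ∑_{i>q} d_i², and the optimal q minimizes (1/2)∑_{i>q} d_i² + λq. -/

import Mathlib

open Matrix BigOperators Finset

noncomputable section

/-- Squared Frobenius norm of a real matrix. -/
def frobSq {m n : ℕ} (A : Matrix (Fin m) (Fin n) ℝ) : ℝ :=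
  ∑ i, ∑ j, (A i j) ^ 2

/-- Frobenius norm. -/
def frobNorm {m n : ℕ} (A : Matrix (Fin m) (Fin n) ℝ) : ℝ :=
  Real.sqrt (frobSq A)

/-- The singular values of `A`, as square roots of the eigenvalues of `Aᴴ * A`. -/
def singVals {m n : ℕ} (A : Matrix (Fin m) (Fin n) ℝ) : Fin n → ℝ :=
  fun i => Real.sqrt ((Matrix.isHermitian_conjTranspose_mul_self A).eigenvalues i)

/-- Nuclear norm: the sum of the singular values. -/
def nnorm {m n : ℕ} (A : Matrix (Fin m) (Fin n) ℝ) : ℝ :=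
  ∑ i, singVals A i

/-- Spectral norm: the largest singular value. -/
def specNorm {m n : ℕ} (A : Matrix (Fin m) (Fin n) ℝ) : ℝ :=
  ⨆ i, singVals A i

/-- Projection onto the observed entries `Ω`. -/
def pO {m n : ℕ} (Ω : Finset (Fin m × Fin n)) (Y : Matrix (Fin m) (Fin n) ℝ) :
    Matrix (Fin m) (Fin n) ℝ :=
  fun i j => if (i, j) ∈ Ω then Y i j else 0

/-- Complementary projection `P_Ω^⊥ = I - P_Ω`. -/
def pOc {m n : ℕ} (Ω : Finset (Fin m × Fin n)) (Y : Matrix (Fin m) (Fin n) ℝ) :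
    Matrix (Fin m) (Fin n) ℝ :=
  Y - pO Ω Y

/-- The objective `f_λ(Z) = ½‖P_Ω(Z) - P_Ω(X)‖_F² + λ‖Z‖_*`. -/
def fObj {m n : ℕ} (Ω : Finset (Fin m × Fin n)) (X : Matrix (Fin m) (Fin n) ℝ) (lam : ℝ)
    (Z : Matrix (Fin m) (Fin n) ℝ) : ℝ :=
  (1 / 2) * frobSq (pO Ω Z - pO Ω X) + lam * nnorm Z

/-- The surrogate `Q_λ(Z | Z̃) = ½‖P_Ω(X) + P_Ω^⊥(Z̃) - Z‖_F² + λ‖Z‖_*`. -/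
def qObj {m n : ℕ} (Ω : Finset (Fin m × Fin n)) (X : Matrix (Fin m) (Fin n) ℝ) (lam : ℝ)
    (Z Zt : Matrix (Fin m) (Fin n) ℝ) : ℝ :=
  (1 / 2) * frobSq (pO Ω X + pOc Ω Zt - Z) + lam * nnorm Z

/-- `IsSVD W U d V` : `W = U D Vᵀ` is a thin SVD of `W` with strictly positive
singular values `d` and orthonormal columns in `U` and `V`. -/
def IsSVD {m n r : ℕ} (W : Matrix (Fin m) (Fin n) ℝ) (U : Matrix (Fin m) (Fin r) ℝ)
    (d : Fin r → ℝ) (V : Matrix (Fin n) (Fin r) ℝ) : Prop :=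
  Uᵀ * U = 1 ∧ Vᵀ * V = 1 ∧ (∀ i, 0 < d i) ∧ W = U * Matrix.diagonal d * Vᵀ

/-- Trace inner product `⟨A, B⟩ = tr(AᵀB)`. -/
def minner {m n : ℕ} (A B : Matrix (Fin m) (Fin n) ℝ) : ℝ :=
  ∑ i, ∑ j, A i j * B i j

/-- `G` is a subgradient of the nuclear norm at `Z`. -/
def NucSubgrad {m n : ℕ} (Z G : Matrix (Fin m) (Fin n) ℝ) : Prop :=
  ∀ Y, nnorm Z + minner G (Y - Z) ≤ nnorm Y

end

/-!
Let `P` be the orthogonal projection onto the column space of `Z`, so that `trace P = rank Z`,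
and let `tᵢ = ‖P uᵢ‖² ∈ [0, 1]` for the columns `uᵢ` of `U`. Pythagoras gives
`‖Z - W‖² = ‖Z - P W‖² + ∑ dᵢ² (1 - tᵢ)`, and `∑ tᵢ ≤ trace P`, hence
`½‖Z - W‖² + λ rank Z ≥ ½‖Z - P W‖² + ∑ (½ dᵢ² (1 - tᵢ) + λ tᵢ) ≥ ∑ min (λ, ½ dᵢ²)`,
a bound attained by the hard-thresholded matrix. As no `dᵢ²` equals `2λ`, equality forces
`tᵢ = 1` when `dᵢ² > 2λ` and `tᵢ = 0` otherwise, i.e. `P U = U χ` for the indicator `χ` of the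
kept singular values, and `Z = P W` is the hard-thresholded matrix.
-/

section Gram

variable {ι κ : Type*}

lemma transpose_mul_self_apply_self [Fintype ι] (A : Matrix ι κ ℝ) (j : κ) :
    (Aᵀ * A) j j = ∑ i, A i j ^ 2 := by
  simp only [mul_apply, transpose_apply, sq]

lemma transpose_mul_self_apply_self_nonneg [Fintype ι] (A : Matrix ι κ ℝ) (j : κ) :
    0 ≤ (Aᵀ * A) j j := by
  rw [transpose_mul_self_apply_self]; positivity

lemma transpose_mul_self_apply_self_eq_zero_iff [Fintype ι] {A : Matrix ι κ ℝ} {j : κ} :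
    (Aᵀ * A) j j = 0 ↔ ∀ i, A i j = 0 := by
  simp [transpose_mul_self_apply_self, Finset.sum_eq_zero_iff_of_nonneg, sq_nonneg]

lemma IsStarProjection.transpose_eq [Fintype ι] {P : Matrix ι ι ℝ} (hP : IsStarProjection P) :
    Pᵀ = P :=
  hP.isSelfAdjoint.star_eq

lemma IsStarProjection.transpose_mul_self_eq_add [Fintype ι] {P : Matrix ι ι ℝ}
    (hP : IsStarProjection P) (X : Matrix ι κ ℝ) :
    Xᵀ * X = (P * X)ᵀ * (P * X) + (X - P * X)ᵀ * (X - P * X) := by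
  have hPX : (P * X)ᵀ * (P * X) = Xᵀ * (P * X) := by
    rw [transpose_mul, hP.transpose_eq, Matrix.mul_assoc, ← Matrix.mul_assoc P,
      hP.isIdempotentElem.eq]
  rw [transpose_sub, Matrix.sub_mul, Matrix.mul_sub, Matrix.mul_sub, hPX, transpose_mul,
    hP.transpose_eq, Matrix.mul_assoc Xᵀ P X]
  abel

end Gram

section Frobenius

variable {m n : ℕ}

lemma frobSq_eq_trace (A : Matrix (Fin m) (Fin n) ℝ) : frobSq A = trace (Aᵀ * A) := by
  simp only [frobSq, trace, Matrix.diag, transpose_mul_self_apply_self]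
  exact Finset.sum_comm

lemma frobSq_nonneg (A : Matrix (Fin m) (Fin n) ℝ) : 0 ≤ frobSq A := by
  unfold frobSq; positivity

lemma frobSq_eq_zero_iff {A : Matrix (Fin m) (Fin n) ℝ} : frobSq A = 0 ↔ A = 0 := by
  simp [frobSq, Finset.sum_eq_zero_iff_of_nonneg, sq_nonneg, Finset.sum_nonneg, ← Matrix.ext_iff]

lemma frobSq_transpose (A : Matrix (Fin m) (Fin n) ℝ) : frobSq Aᵀ = frobSq A := by
  simp only [frobSq, transpose_apply]
  exact Finset.sum_comm

lemma frobSq_sub_comm (A B : Matrix (Fin m) (Fin n) ℝ) : frobSq (A - B) = frobSq (B - A) := by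
  rw [← neg_sub B A]
  simp only [frobSq, Matrix.neg_apply, neg_sq]

lemma frobSq_mul_diagonal {r : ℕ} (A : Matrix (Fin m) (Fin r) ℝ) (d : Fin r → ℝ) :
    frobSq (A * diagonal d) = ∑ i, d i ^ 2 * (Aᵀ * A) i i := by
  simp only [frobSq, mul_diagonal, transpose_mul_self_apply_self, Finset.mul_sum, mul_pow]
  rw [Finset.sum_comm]
  exact Finset.sum_congr rfl fun i _ => Finset.sum_congr rfl fun k _ => mul_comm _ _

lemma IsStarProjection.frobSq_eq_add {P : Matrix (Fin m) (Fin m) ℝ} (hP : IsStarProjection P)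
    (X : Matrix (Fin m) (Fin n) ℝ) : frobSq X = frobSq (P * X) + frobSq (X - P * X) := by
  rw [frobSq_eq_trace, hP.transpose_mul_self_eq_add X, trace_add, ← frobSq_eq_trace,
    ← frobSq_eq_trace]

lemma IsStarProjection.frobSq_eq_trace {P : Matrix (Fin m) (Fin m) ℝ}
    (hP : IsStarProjection P) : frobSq P = trace P := by
  rw [_root_.frobSq_eq_trace, hP.transpose_eq, hP.isIdempotentElem.eq]

end Frobenius

lemma rank_mul_diagonal_mul_le {l o ι K : Type*} [Fintype o] [Fintype ι] [DecidableEq ι]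
    [Field K] [DecidableEq K] (A : Matrix l ι K) (c : ι → K) (B : Matrix ι o K) :
    (A * diagonal c * B).rank ≤ Fintype.card {i // c i ≠ 0} :=
  (rank_mul_le_left _ _).trans ((rank_mul_le_right _ _).trans (rank_diagonal c).le)

lemma exists_isStarProjection_mul_eq_self {m n : ℕ} (Z : Matrix (Fin m) (Fin n) ℝ) :
    ∃ P : Matrix (Fin m) (Fin m) ℝ, IsStarProjection P ∧ P * Z = Z ∧ P.trace = Z.rank := by
  set K := LinearMap.range (toEuclideanLin Z)
  set P : Matrix (Fin m) (Fin m) ℝ := (toEuclideanCLM (𝕜 := ℝ)).symm K.starProjection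
  have hP : toEuclideanLin P = K.starProjection := by
    rw [← coe_toEuclideanCLM_eq_toEuclideanLin, StarAlgEquiv.apply_symm_apply]
  have hrank : Z.rank = Module.finrank ℝ K :=
    rank_eq_finrank_range_toLin Z (PiLp.basisFun 2 ℝ (Fin m)) (PiLp.basisFun 2 ℝ (Fin n))
  have htrace : P.trace = LinearMap.trace ℝ _ (toEuclideanLin P) := by
    rw [LinearMap.trace_eq_matrix_trace ℝ (PiLp.basisFun 2 ℝ (Fin m))]
    exact congrArg trace (LinearMap.toMatrix_toLin _ _ P).symm
  refine ⟨P, ?_, ?_, ?_⟩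
  · have hQ : IsStarProjection (toEuclideanCLM (𝕜 := ℝ) P) := by
      rw [StarAlgEquiv.apply_symm_apply]; exact isStarProjection_starProjection
    have hinj := EquivLike.injective (toEuclideanCLM (𝕜 := ℝ) (n := Fin m))
    refine ⟨hinj ?_, hinj ?_⟩
    · rw [map_mul, hQ.isIdempotentElem.eq]
    · rw [map_star, hQ.isSelfAdjoint.star_eq]
  · apply toEuclideanLin.injective
    ext x : 1
    rw [toLpLin_mul_same, LinearMap.comp_apply, hP, ContinuousLinearMap.coe_coe,
      K.starProjection_eq_self_iff.mpr (LinearMap.mem_range_self _ x)]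
  · rw [htrace, hP, (LinearMap.IsIdempotentElem.isProj_range _
      (ContinuousLinearMap.IsIdempotentElem.toLinearMap K.isIdempotentElem_starProjection)).trace,
      K.range_starProjection, hrank]

section OrthonormalColumns

variable {m n r : ℕ} {U : Matrix (Fin m) (Fin r) ℝ}

lemma frobSq_mul_of_transpose_mul_self_eq_one (hU : Uᵀ * U = 1)
    (X : Matrix (Fin r) (Fin n) ℝ) : frobSq (U * X) = frobSq X := by
  rw [frobSq_eq_trace, frobSq_eq_trace, transpose_mul, Matrix.mul_assoc, ← Matrix.mul_assoc Uᵀ,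
    hU, Matrix.one_mul]

lemma frobSq_mul_transpose_of_transpose_mul_self_eq_one {V : Matrix (Fin n) (Fin r) ℝ}
    (hV : Vᵀ * V = 1) (X : Matrix (Fin m) (Fin r) ℝ) : frobSq (X * Vᵀ) = frobSq X := by
  rw [← frobSq_transpose, transpose_mul, transpose_transpose,
    frobSq_mul_of_transpose_mul_self_eq_one hV, frobSq_transpose]

lemma isStarProjection_mul_transpose (hU : Uᵀ * U = 1) : IsStarProjection (U * Uᵀ) where
  isIdempotentElem := by
    rw [IsIdempotentElem, Matrix.mul_assoc, ← Matrix.mul_assoc Uᵀ, hU, Matrix.one_mul]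
  isSelfAdjoint := by
    rw [IsSelfAdjoint, star_eq_conjTranspose, conjTranspose_eq_transpose_of_trivial,
      transpose_mul, transpose_transpose]

lemma frobSq_transpose_mul_le (hU : Uᵀ * U = 1) (Y : Matrix (Fin m) (Fin n) ℝ) :
    frobSq (Uᵀ * Y) ≤ frobSq Y := by
  rw [← frobSq_mul_of_transpose_mul_self_eq_one hU, ← Matrix.mul_assoc,
    (isStarProjection_mul_transpose hU).frobSq_eq_add Y]
  linarith [frobSq_nonneg (Y - U * Uᵀ * Y)]

end OrthonormalColumns

lemma min_le_add_mul {a b t : ℝ} (ht0 : 0 ≤ t) (ht1 : t ≤ 1) :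
    min a b ≤ b * (1 - t) + a * t := by
  nlinarith [min_le_left a b, min_le_right a b]

lemma eq_ite_of_add_mul_le_min {lam δ t : ℝ} (hδ : δ ≠ 2 * lam) (ht0 : 0 ≤ t) (ht1 : t ≤ 1)
    (h : δ / 2 * (1 - t) + lam * t ≤ min lam (δ / 2)) : t = if 2 * lam < δ then 1 else 0 := by
  split_ifs with hlt
  · rw [min_eq_left (by linarith)] at h
    nlinarith
  · have hlt' : δ < 2 * lam := lt_of_le_of_ne (not_lt.mp hlt) hδ
    rw [min_eq_right (by linarith)] at h
    nlinarith

noncomputable section HardThreshold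

variable {m n r : ℕ}

def rankPenalized (lam : ℝ) (W Z : Matrix (Fin m) (Fin n) ℝ) : ℝ :=
  (1 / 2) * frobSq (Z - W) + lam * Z.rank

def hardThreshold (lam : ℝ) (U : Matrix (Fin m) (Fin r) ℝ) (d : Fin r → ℝ)
    (V : Matrix (Fin n) (Fin r) ℝ) : Matrix (Fin m) (Fin n) ℝ :=
  U * diagonal (fun i => if 2 * lam < d i ^ 2 then d i else 0) * Vᵀ

variable {W : Matrix (Fin m) (Fin n) ℝ} {U : Matrix (Fin m) (Fin r) ℝ} {d : Fin r → ℝ}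
  {V : Matrix (Fin n) (Fin r) ℝ} {P : Matrix (Fin m) (Fin m) ℝ}

lemma frobSq_mul_diagonal_mul_transpose (hU : Uᵀ * U = 1) (hV : Vᵀ * V = 1)
    (e : Fin r → ℝ) :
    frobSq (U * diagonal e * Vᵀ) = ∑ i, e i ^ 2 := by
  rw [frobSq_mul_transpose_of_transpose_mul_self_eq_one hV, frobSq_mul_diagonal, hU]
  simp

lemma rankPenalized_hardThreshold_le {lam : ℝ} (hlam : 0 ≤ lam) (hU : Uᵀ * U = 1)
    (hV : Vᵀ * V = 1) (hW : W = U * diagonal d * Vᵀ) :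
    rankPenalized lam W (hardThreshold lam U d V) ≤ ∑ i, min lam (d i ^ 2 / 2) := by
  have hfrob : frobSq (hardThreshold lam U d V - W) =
      ∑ i, if 2 * lam < d i ^ 2 then 0 else d i ^ 2 := by
    rw [hardThreshold, hW, ← Matrix.sub_mul, ← Matrix.mul_sub, diagonal_sub,
      frobSq_mul_diagonal_mul_transpose hU hV]
    refine Finset.sum_congr rfl fun i _ => ?_
    split_ifs <;> simp
  have hrank : ((hardThreshold lam U d V).rank : ℝ) ≤
      ∑ i, if 2 * lam < d i ^ 2 then 1 else 0 := by
    have hsupp : (fun i => (if 2 * lam < d i ^ 2 then d i else 0) ≠ 0) ≤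
        fun i => 2 * lam < d i ^ 2 := fun i hi => by
      by_contra h
      exact hi (if_neg h)
    rw [← Finset.natCast_card_filter, ← Fintype.card_subtype, Nat.cast_le]
    exact (rank_mul_diagonal_mul_le _ _ _).trans (Fintype.card_subtype_mono _ _ hsupp)
  calc rankPenalized lam W (hardThreshold lam U d V)
      ≤ (1 / 2) * ∑ i, (if 2 * lam < d i ^ 2 then 0 else d i ^ 2)
        + lam * ∑ i, (if 2 * lam < d i ^ 2 then 1 else 0) := by
        rw [rankPenalized, hfrob]; gcongr
    _ = ∑ i, min lam (d i ^ 2 / 2) := by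
        rw [Finset.mul_sum, Finset.mul_sum, ← Finset.sum_add_distrib]
        refine Finset.sum_congr rfl fun i _ => ?_
        split_ifs with h
        · rw [min_eq_left (by linarith)]; ring
        · rw [min_eq_right (by linarith)]; ring

lemma IsStarProjection.transpose_mul_self_apply_self_add (hP : IsStarProjection P)
    (hU : Uᵀ * U = 1) (i : Fin r) :
    ((P * U)ᵀ * (P * U)) i i + ((U - P * U)ᵀ * (U - P * U)) i i = 1 := by
  simpa [hU] using (congrFun (congrFun (hP.transpose_mul_self_eq_add U) i) i).symm

lemma IsStarProjection.frobSq_sub_mul_svd (hP : IsStarProjection P) (hU : Uᵀ * U = 1)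
    (hV : Vᵀ * V = 1) (hW : W = U * diagonal d * Vᵀ) :
    frobSq (W - P * W) = ∑ i, d i ^ 2 * (1 - ((P * U)ᵀ * (P * U)) i i) := by
  have hfactor : W - P * W = (U - P * U) * diagonal d * Vᵀ := by
    rw [hW, Matrix.sub_mul, Matrix.sub_mul, Matrix.mul_assoc P, Matrix.mul_assoc P]
  rw [hfactor, frobSq_mul_transpose_of_transpose_mul_self_eq_one hV, frobSq_mul_diagonal]
  refine Finset.sum_congr rfl fun i _ => ?_
  rw [← hP.transpose_mul_self_apply_self_add hU i, add_sub_cancel_left]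

lemma IsStarProjection.sum_transpose_mul_self_apply_self_le_trace (hP : IsStarProjection P)
    (hU : Uᵀ * U = 1) : ∑ i, ((P * U)ᵀ * (P * U)) i i ≤ trace P :=
  calc ∑ i, ((P * U)ᵀ * (P * U)) i i = frobSq (P * U) := (_root_.frobSq_eq_trace _).symm
    _ = frobSq (Uᵀ * P) := by rw [← frobSq_transpose, transpose_mul, hP.transpose_eq]
    _ ≤ frobSq P := frobSq_transpose_mul_le hU P
    _ = trace P := hP.frobSq_eq_trace

lemma IsStarProjection.mul_eq_mul_diagonal (hP : IsStarProjection P) (hU : Uᵀ * U = 1)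
    (p : Fin r → Prop) [DecidablePred p]
    (ht : ∀ i, ((P * U)ᵀ * (P * U)) i i = if p i then 1 else 0) :
    P * U = U * diagonal (fun i => if p i then (1 : ℝ) else 0) := by
  ext k i
  rw [mul_diagonal]
  have hsum := hP.transpose_mul_self_apply_self_add hU i
  have hti := ht i
  split_ifs at hti ⊢
  · rw [hti, add_eq_left, transpose_mul_self_apply_self_eq_zero_iff] at hsum
    rw [mul_one, eq_comm, ← sub_eq_zero, ← Matrix.sub_apply, hsum k]
  · rw [mul_zero]
    exact transpose_mul_self_apply_self_eq_zero_iff.mp hti k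

lemma IsStarProjection.le_rankPenalized {lam : ℝ} {Z : Matrix (Fin m) (Fin n) ℝ}
    (hlam : 0 ≤ lam) (hP : IsStarProjection P) (hPZ : P * Z = Z) (htr : P.trace = Z.rank)
    (hU : Uᵀ * U = 1) (hV : Vᵀ * V = 1) (hW : W = U * diagonal d * Vᵀ) :
    (1 / 2) * frobSq (Z - P * W) + ∑ i, (d i ^ 2 / 2 * (1 - ((P * U)ᵀ * (P * U)) i i)
      + lam * ((P * U)ᵀ * (P * U)) i i) ≤ rankPenalized lam W Z := by
  have hpyth : frobSq (Z - W) = frobSq (Z - P * W) + frobSq (W - P * W) := by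
    rw [frobSq_sub_comm Z W, hP.frobSq_eq_add (W - Z), Matrix.mul_sub, hPZ,
      frobSq_sub_comm (P * W) Z, sub_sub_sub_cancel_right]
  have hsplit : ∑ i, (d i ^ 2 / 2 * (1 - ((P * U)ᵀ * (P * U)) i i)
      + lam * ((P * U)ᵀ * (P * U)) i i) = (1 / 2) * frobSq (W - P * W)
        + lam * ∑ i, ((P * U)ᵀ * (P * U)) i i := by
    rw [hP.frobSq_sub_mul_svd hU hV hW, Finset.mul_sum, Finset.mul_sum, ← Finset.sum_add_distrib]
    exact Finset.sum_congr rfl fun i _ => by ring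
  rw [rankPenalized, hpyth, hsplit, ← htr]
  nlinarith [mul_le_mul_of_nonneg_left (hP.sum_transpose_mul_self_apply_self_le_trace hU) hlam]

lemma eq_hardThreshold_of_rankPenalized_le {lam : ℝ} {Z : Matrix (Fin m) (Fin n) ℝ}
    (hlam : 0 ≤ lam) (hU : Uᵀ * U = 1) (hV : Vᵀ * V = 1) (hW : W = U * diagonal d * Vᵀ)
    (hgen : ∀ i, d i ^ 2 ≠ 2 * lam)
    (hZ : rankPenalized lam W Z ≤ ∑ i, min lam (d i ^ 2 / 2)) :
    Z = hardThreshold lam U d V := by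
  obtain ⟨P, hP, hPZ, htr⟩ := exists_isStarProjection_mul_eq_self Z
  set t : Fin r → ℝ := fun i => ((P * U)ᵀ * (P * U)) i i
  have ht0 : ∀ i, 0 ≤ t i := fun i => transpose_mul_self_apply_self_nonneg _ i
  have ht1 : ∀ i, t i ≤ 1 := fun i => by
    linarith [hP.transpose_mul_self_apply_self_add hU i,
      transpose_mul_self_apply_self_nonneg (U - P * U) i]
  have hmin : ∀ i ∈ Finset.univ,
      min lam (d i ^ 2 / 2) ≤ d i ^ 2 / 2 * (1 - t i) + lam * t i :=
    fun i _ => min_le_add_mul (ht0 i) (ht1 i)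
  have hbound := hP.le_rankPenalized hlam hPZ htr hU hV hW
  have hF : frobSq (Z - P * W) = 0 := by
    linarith [Finset.sum_le_sum hmin, frobSq_nonneg (Z - P * W)]
  have hterm := (Finset.sum_eq_sum_iff_of_le hmin).mp (by
    linarith [Finset.sum_le_sum hmin, frobSq_nonneg (Z - P * W)])
  have hPU : P * U = U * diagonal (fun i => if 2 * lam < d i ^ 2 then (1 : ℝ) else 0) :=
    hP.mul_eq_mul_diagonal hU _ fun i =>
      eq_ite_of_add_mul_le_min (hgen i) (ht0 i) (ht1 i) (hterm i (Finset.mem_univ i)).ge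
  calc Z = P * W := (sub_eq_zero.mp (frobSq_eq_zero_iff.mp hF))
    _ = P * U * diagonal d * Vᵀ := by simp only [hW, Matrix.mul_assoc]
    _ = hardThreshold lam U d V := by
      rw [hPU, Matrix.mul_assoc U (diagonal _), diagonal_mul_diagonal, hardThreshold]
      congr with i
      split_ifs <;> simp

end HardThreshold

theorem hard_threshold_unique_minimizer_general {m n r : ℕ}
    (W : Matrix (Fin m) (Fin n) ℝ) (U : Matrix (Fin m) (Fin r) ℝ)
    (d : Fin r → ℝ) (V : Matrix (Fin n) (Fin r) ℝ)
    (lam : ℝ) (hlam : 0 < lam) (hSVD : IsSVD W U d V)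
    (hgen : ∀ i : Fin r, (d i) ^ 2 ≠ 2 * lam) :
    ∀ Z : Matrix (Fin m) (Fin n) ℝ,
      Z ≠ U * Matrix.diagonal (fun i => if 2 * lam < (d i) ^ 2 then d i else 0) * Vᵀ →
      (1 / 2) * frobSq (U * Matrix.diagonal (fun i => if 2 * lam < (d i) ^ 2 then d i else 0)
            * Vᵀ - W) +
          lam * ((U * Matrix.diagonal (fun i => if 2 * lam < (d i) ^ 2 then d i else 0)
            * Vᵀ).rank : ℝ) <
        (1 / 2) * frobSq (Z - W) + lam * (Z.rank : ℝ) := by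
  obtain ⟨hU, hV, -, hW⟩ := hSVD
  intro Z hZ
  by_contra! hle
  exact hZ (eq_hardThreshold_of_rankPenalized_le hlam.le hU hV hW hgen
    (hle.trans (rankPenalized_hardThreshold_le hlam.le hU hV hW)))

/-- the unique minimizer of `½‖Z - W‖_F² + λ rank(Z)` is the
hard-thresholded SVD retaining exactly the singular values with `dᵢ² > 2λ`. -/
theorem hard_threshold_unique_minimizer {m n r : ℕ}
    (W : Matrix (Fin m) (Fin n) ℝ) (U : Matrix (Fin m) (Fin r) ℝ)
    (d : Fin r → ℝ) (V : Matrix (Fin n) (Fin r) ℝ)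
    (lam : ℝ) (hlam : 0 < lam) (hSVD : IsSVD W U d V)
    (hsorted : ∀ i j : Fin r, i ≤ j → d j ≤ d i)
    (hdistinct : ∀ i j : Fin r, i ≠ j → d i ≠ d j)
    (hgen : ∀ i : Fin r, (d i) ^ 2 ≠ 2 * lam) :
    ∀ Z : Matrix (Fin m) (Fin n) ℝ,
      Z ≠ U * Matrix.diagonal (fun i => if 2 * lam < (d i) ^ 2 then d i else 0) * Vᵀ →
      (1 / 2) * frobSq (U * Matrix.diagonal (fun i => if 2 * lam < (d i) ^ 2 then d i else 0)
            * Vᵀ - W) +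
          lam * ((U * Matrix.diagonal (fun i => if 2 * lam < (d i) ^ 2 then d i else 0)
            * Vᵀ).rank : ℝ) <
        (1 / 2) * frobSq (Z - W) + lam * (Z.rank : ℝ) :=
  hard_threshold_unique_minimizer_general W U d V lam hlam hSVD hgen
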